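/- arXiv:0704.1005 — 2 statements merged into one kernel-verified Lean document; each statement's English description precedes it below -/
import Mathlib

section
/- Fix an integer n ≥ 1 and reals b > 0 and q > 0. Define a_m = m/(log m)² for integers m ≥ 2. Then there exist a constant C > 0 and an integer M ≥ 2, depending only on b, q and n, such that for all integers m ≥ M one has | π^{−n} ∫_{{x ∈ ℝ^{2n} : ‖x‖² ≤ b/a_m}} (1 − ‖x‖²)^m dx − m!/(m+n)! | ≤ C m^{−q}. -/
set_option maxHeartbeats 1000000
open MeasureTheory Metric Set Real intervalIntegral

lemma beta_nat (b : ℕ) : ∀ a : ℕ, ∫ x in (0:ℝ)..1, x^a * (1-x)^b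
    = (Nat.factorial a * Nat.factorial b : ℝ) / Nat.factorial (a+b+1) := by
  induction b with
  | zero =>
    intro a
    have h : ((a:ℝ)+1) ≠ 0 := by positivity
    have h2 : (Nat.factorial a : ℝ) ≠ 0 := Nat.cast_ne_zero.2 a.factorial_ne_zero
    simp [integral_pow, Nat.factorial_succ]
    field_simp
  | succ b IH =>
    intro a
    have ha : ((a:ℝ)+1) ≠ 0 := by positivity
    have hparts : ∫ x in (0:ℝ)..1, (1-x)^(b+1) * x^a
        = (1-(1:ℝ))^(b+1) * (1^(a+1)/((a:ℝ)+1)) - (1-(0:ℝ))^(b+1) * ((0:ℝ)^(a+1)/((a:ℝ)+1))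
          - ∫ x in (0:ℝ)..1, (-((b:ℝ)+1) * (1-x)^b) * (x^(a+1)/((a:ℝ)+1)) := by
      apply intervalIntegral.integral_mul_deriv_eq_deriv_mul
        (u := fun x => (1-x)^(b+1)) (u' := fun x => -((b:ℝ)+1) * (1-x)^b)
        (v := fun x => x^(a+1)/((a:ℝ)+1)) (v' := fun x => x^a)
      · intro x _
        have h1 : HasDerivAt (fun x : ℝ => (1-x)) (-1) x := by
          simpa using (hasDerivAt_id x).const_sub 1
        have h2 : HasDerivAt (fun x : ℝ => (1-x)^(b+1)) ((↑(b+1):ℝ) * (1-x)^b * -1) x := h1.pow (b+1)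
        exact h2.congr_deriv (by push_cast; ring)
      · intro x _
        have h3 := (hasDerivAt_pow (a+1) x).div_const ((a:ℝ)+1)
        convert h3 using 1
        push_cast
        field_simp
      · exact (continuous_const.mul ((continuous_const.sub continuous_id).pow b)).intervalIntegrable _ _
      · exact (continuous_pow a).intervalIntegrable _ _
    have key : ∫ x in (0:ℝ)..1, x^a * (1-x)^(b+1)
        = (((b:ℝ)+1)/((a:ℝ)+1)) * ∫ x in (0:ℝ)..1, x^(a+1) * (1-x)^b := by
      have e1 : ∫ x in (0:ℝ)..1, (1-x)^(b+1) * x^a = ∫ x in (0:ℝ)..1, x^a * (1-x)^(b+1) := by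
        apply intervalIntegral.integral_congr; intro x _; ring
      have e2 : ∫ x in (0:ℝ)..1, (-((b:ℝ)+1) * (1-x)^b) * (x^(a+1)/((a:ℝ)+1))
          = (-((b:ℝ)+1)/((a:ℝ)+1)) * ∫ x in (0:ℝ)..1, x^(a+1) * (1-x)^b := by
        rw [← intervalIntegral.integral_const_mul]
        apply intervalIntegral.integral_congr; intro x _; field_simp
      rw [e1, e2] at hparts
      rw [hparts]
      simp
      ring
    rw [key, IH (a+1)]
    have h4 : (Nat.factorial (a+1) : ℝ) = ((a:ℝ)+1) * Nat.factorial a := by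
      rw [Nat.factorial_succ]; push_cast; ring
    have h5 : (Nat.factorial (b+1) : ℝ) = ((b:ℝ)+1) * Nat.factorial b := by
      rw [Nat.factorial_succ]; push_cast; ring
    have h6 : a + 1 + b + 1 = a + (b+1) + 1 := by ring
    rw [h6, h4, h5]
    have h7 : (Nat.factorial (a+(b+1)+1) : ℝ) ≠ 0 := Nat.cast_ne_zero.2 (Nat.factorial_ne_zero _)
    field_simp

lemma polar (n : ℕ) (hn : 1 ≤ n) (m : ℕ) (r : ℝ) (hr : 0 ≤ r) :
    ∫ x in Metric.closedBall (0 : EuclideanSpace ℝ (Fin (2*n))) r, ((1:ℝ) - ‖x‖^2)^m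
    = (2*n : ℕ) * (volume (Metric.ball (0:EuclideanSpace ℝ (Fin (2*n))) 1)).toReal
        * ∫ y in (0:ℝ)..r, y^(2*n-1) * (1-y^2)^m := by
  set E := EuclideanSpace ℝ (Fin (2*n))
  haveI : Nonempty (Fin (2*n)) := ⟨⟨0, by omega⟩⟩
  haveI : Nontrivial E := by
    have h0 : 0 < Module.finrank ℝ E := by
      rw [show Module.finrank ℝ E = 2*n from finrank_euclideanSpace_fin]; omega
    exact Module.nontrivial_of_finrank_pos h0
  set f : ℝ → ℝ := Set.indicator (Set.Iic r) (fun y => (1-y^2)^m) with hf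
  have h1 : ∫ x in Metric.closedBall (0 : E) r, ((1:ℝ) - ‖x‖^2)^m = ∫ x : E, f ‖x‖ := by
    rw [← MeasureTheory.integral_indicator measurableSet_closedBall]
    congr 1
    funext x
    by_cases h : ‖x‖ ≤ r
    · simp [hf, Set.indicator_of_mem, h, Metric.mem_closedBall, dist_zero_right]
    · simp [hf, Set.indicator_of_notMem, h, Metric.mem_closedBall, dist_zero_right]
  rw [h1, MeasureTheory.integral_fun_norm_addHaar volume f]
  have hdim : Module.finrank ℝ E = 2*n := finrank_euclideanSpace_fin
  rw [hdim]
  rw [nsmul_eq_mul, smul_eq_mul, mul_assoc]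
  congr 2
  have h2 : ∀ y : ℝ, y ^ (2*n-1) • f y
      = Set.indicator (Set.Iic r) (fun y => y^(2*n-1) * (1-y^2)^m) y := by
    intro y
    by_cases h : y ∈ Set.Iic r <;> simp [hf, h]
  simp_rw [h2]
  rw [MeasureTheory.setIntegral_indicator measurableSet_Iic, Set.Ioi_inter_Iic,
    ← intervalIntegral.integral_of_le hr]
  


lemma subst (n : ℕ) (hn : 1 ≤ n) (m : ℕ) (r : ℝ) :
    ∫ y in (0:ℝ)..r, y^(2*n-1) * (1-y^2)^m
    = (1/2) * ∫ u in (0:ℝ)..r^2, u^(n-1) * (1-u)^m := by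
  have key : (∫ y in (0:ℝ)..r, (2*y) • ((fun u : ℝ => u^(n-1)*(1-u)^m) ∘ (fun y => y^2)) y)
      = ∫ u in (0:ℝ)..r^2, u^(n-1) * (1-u)^m := by
    have := intervalIntegral.integral_comp_smul_deriv
      (f := fun y : ℝ => y^2) (f' := fun y : ℝ => 2*y)
      (g := fun u : ℝ => u^(n-1)*(1-u)^m) (a := 0) (b := r)
      (fun x _ => by simpa [mul_comm] using hasDerivAt_pow 2 x)
      ((continuous_const.mul continuous_id).continuousOn)
      (((continuous_pow _).mul ((continuous_const.sub continuous_id).pow m)))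
    simpa using this
  have e : ∀ y : ℝ, (2*y) • ((fun u : ℝ => u^(n-1)*(1-u)^m) ∘ (fun y => y^2)) y
      = 2 * (y^(2*n-1) * (1-y^2)^m) := by
    intro y
    have : (y^2)^(n-1) * y = y^(2*n-1) := by
      rw [← pow_mul, ← pow_succ]
      congr 1
      omega
    simp only [smul_eq_mul, Function.comp]
    rw [← this]
    ring
  simp_rw [e] at key
  rw [intervalIntegral.integral_const_mul] at key
  rw [← key]
  ring

lemma vol_ball (n : ℕ) (hn : 1 ≤ n) :
    (volume (Metric.ball (0:EuclideanSpace ℝ (Fin (2*n))) 1)).toReal = π^n / Nat.factorial n := by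
  haveI : Nonempty (Fin (2*n)) := ⟨⟨0, by omega⟩⟩
  rw [EuclideanSpace.volume_ball]
  have hc : Fintype.card (Fin (2*n)) = 2*n := by simp
  rw [hc]
  have h2 : ((2*n : ℕ) : ℝ)/2 + 1 = (n:ℝ) + 1 := by push_cast; ring
  rw [h2, Real.Gamma_nat_eq_factorial]
  have h3 : Real.sqrt π ^ (2*n) = π^n := by
    rw [pow_mul, Real.sq_sqrt pi_nonneg]
  rw [h3]
  simp [ENNReal.toReal_ofReal (by positivity : (0:ℝ) ≤ π^n / Nat.factorial n)]
lemma exact_full (n : ℕ) (hn : 1 ≤ n) (m : ℕ) :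
    ∫ x in Metric.closedBall (0 : EuclideanSpace ℝ (Fin (2*n))) 1, ((1:ℝ) - ‖x‖^2)^m
    = π^n * ((Nat.factorial m : ℝ) / (Nat.factorial (m+n) : ℝ)) := by
  rw [polar n hn m 1 zero_le_one, vol_ball n hn, subst n hn m 1, one_pow, beta_nat m (n-1)]
  have h1 : (n-1) + m + 1 = m + n := by omega
  rw [h1]
  have h2 : ((2*n : ℕ) : ℝ) = 2 * n := by push_cast; ring
  have h3 : (Nat.factorial n : ℝ) = n * Nat.factorial (n-1) := by
    rw [← Nat.mul_factorial_pred (by omega : n ≠ 0)]; push_cast; ring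
  have h4 : (Nat.factorial (n-1) : ℝ) ≠ 0 := Nat.cast_ne_zero.2 (Nat.factorial_ne_zero _)
  have h5 : (Nat.factorial (m+n) : ℝ) ≠ 0 := Nat.cast_ne_zero.2 (Nat.factorial_ne_zero _)
  have h6 : (n:ℝ) ≠ 0 := by positivity
  rw [h2, h3]
  have h7 : (0:ℝ) < π := pi_pos
  field_simp
/-- With `aₘ = m/(log m)²`, the integral of `(1-|z|²)^m` over the shrinking ball
`{|z|² ≤ b/aₘ}` in `ℂⁿ ≅ ℝ^{2n}` (normalized by `π^{-n}`) equals
`m!/(m+n)! + O(m^{-q})`, the O-constant depending only on `b`, `q`, `n`. -/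
theorem stmt_1 (n : ℕ) (hn : 1 ≤ n) (b q : ℝ) (hb : 0 < b) (hq : 0 < q) :
    ∃ (C : ℝ) (M : ℕ), 0 < C ∧ 2 ≤ M ∧ ∀ m : ℕ, M ≤ m →
      |Real.pi ^ (-(n : ℝ)) *
          (∫ x in {x : EuclideanSpace ℝ (Fin (2 * n)) |
              ‖x‖ ^ 2 ≤ b / ((m : ℝ) / (Real.log m) ^ 2)},
            ((1 : ℝ) - ‖x‖ ^ 2) ^ m)
        - (Nat.factorial m : ℝ) / (Nat.factorial (m + n) : ℝ)|
      ≤ C * (m : ℝ) ^ (-q) := by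
  refine ⟨1, max 2 (max (⌈(16*b)^2⌉₊ + 2) (⌈Real.exp (q/b)⌉₊ + 2)), one_pos, le_max_left _ _, ?_⟩
  intro m hm
  set E := EuclideanSpace ℝ (Fin (2*n))
  haveI : Nonempty (Fin (2*n)) := ⟨⟨0, by omega⟩⟩
  haveI : Nontrivial E := by
    have h0 : 0 < Module.finrank ℝ E := by
      rw [show Module.finrank ℝ E = 2*n from finrank_euclideanSpace_fin]; omega
    exact Module.nontrivial_of_finrank_pos h0
  have hm2 : 2 ≤ m := le_trans (le_max_left _ _) hm
  have hmR : (2:ℝ) ≤ (m:ℝ) := by exact_mod_cast hm2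
  have hm0 : (0:ℝ) < m := by linarith
  have hlogpos : 0 < Real.log m := Real.log_pos (by linarith)
  -- the constant c
  set c : ℝ := b / ((m : ℝ) / (Real.log m) ^ 2) with hc
  have hceq : c = b * (Real.log m)^2 / m := by
    rw [hc]; field_simp
  have hcpos : 0 < c := by rw [hceq]; positivity
  -- (log m)^2 ≤ 16 √m
  have hlogm : Real.log m ≤ 4 * Real.sqrt (Real.sqrt m) := by
    have h1 : Real.log (Real.sqrt (Real.sqrt m)) ≤ Real.sqrt (Real.sqrt m) - 1 :=
      Real.log_le_sub_one_of_pos (by positivity)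
    have h2 : Real.log (Real.sqrt (Real.sqrt m)) = Real.log m / 4 := by
      rw [Real.log_sqrt (Real.sqrt_nonneg _), Real.log_sqrt hm0.le]; ring
    nlinarith [Real.sqrt_nonneg (Real.sqrt (m:ℝ))]
  have hlogsq : (Real.log m)^2 ≤ 16 * Real.sqrt m := by
    nlinarith [Real.sq_sqrt (Real.sqrt_nonneg (m:ℝ)), hlogpos,
      Real.sqrt_nonneg (Real.sqrt (m:ℝ))]
  -- 16 b ≤ √m
  have h16b : 16 * b ≤ Real.sqrt m := by
    have h1 : ((16*b)^2 : ℝ) ≤ m := by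
      have := Nat.le_ceil ((16*b)^2)
      have h2 : (⌈(16*b)^2⌉₊ : ℝ) + 2 ≤ m := by
        have : ⌈(16*b)^2⌉₊ + 2 ≤ m := le_trans (le_trans (le_max_left _ _) (le_max_right _ _)) hm
        exact_mod_cast this
      linarith
    exact Real.le_sqrt_of_sq_le h1
  have hcle1 : c ≤ 1 := by
    rw [hceq, div_le_one hm0]
    have hsq : Real.sqrt m * Real.sqrt m = m := Real.mul_self_sqrt hm0.le
    nlinarith [Real.sqrt_nonneg (m:ℝ)]
  -- the set is a closed ball
  have hset : {x : E | ‖x‖ ^ 2 ≤ b / ((m : ℝ) / (Real.log m) ^ 2)}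
      = Metric.closedBall (0:E) (Real.sqrt c) := by
    ext x
    simp only [Set.mem_setOf_eq, Metric.mem_closedBall, dist_zero_right, ← hc]
    rw [Real.le_sqrt (norm_nonneg x) hcpos.le]
  have hsub : Metric.closedBall (0:E) (Real.sqrt c) ⊆ Metric.closedBall (0:E) 1 := by
    apply Metric.closedBall_subset_closedBall
    rw [show (1:ℝ) = Real.sqrt 1 by simp]
    exact Real.sqrt_le_sqrt hcle1
  -- integrability
  have hcont : Continuous (fun x : E => ((1:ℝ) - ‖x‖^2)^m) :=
    ((continuous_const.sub ((continuous_norm).pow 2)).pow m)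
  have hint : IntegrableOn (fun x : E => ((1:ℝ) - ‖x‖^2)^m) (Metric.closedBall (0:E) 1) volume :=
    hcont.continuousOn.integrableOn_compact (isCompact_closedBall _ _)
  -- difference formula
  have hdiff := MeasureTheory.integral_diff (μ := volume)
    (f := fun x : E => ((1:ℝ) - ‖x‖^2)^m) measurableSet_closedBall hint hsub
  -- bound on the annulus integral
  have hbound : ‖∫ x in Metric.closedBall (0:E) 1 \ Metric.closedBall (0:E) (Real.sqrt c),
      ((1:ℝ) - ‖x‖^2)^m‖ ≤ (1-c)^m * (volume (Metric.closedBall (0:E) 1)).toReal := by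
    have hlt : volume (Metric.closedBall (0:E) 1 \ Metric.closedBall (0:E) (Real.sqrt c)) < ⊤ :=
      lt_of_le_of_lt (measure_mono diff_subset) measure_closedBall_lt_top
    have h := MeasureTheory.norm_setIntegral_le_of_norm_le_const (μ := volume) hlt
      (C := (1-c)^m) (f := fun x : E => ((1:ℝ) - ‖x‖^2)^m) ?_
    · refine le_trans h ?_
      exact mul_le_mul_of_nonneg_left
        (ENNReal.toReal_mono measure_closedBall_lt_top.ne (measure_mono diff_subset))
        (pow_nonneg (by linarith) m)
    · intro x hx
      obtain ⟨hx1, hx2⟩ := hx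
      rw [Metric.mem_closedBall, dist_zero_right] at hx1
      have hx2' : ¬ ‖x‖ ≤ Real.sqrt c := by
        simpa [Metric.mem_closedBall, dist_zero_right] using hx2
      have hxc : c ≤ ‖x‖^2 := by
        by_contra hlt'
        push_neg at hlt'
        exact hx2' (Real.le_sqrt_of_sq_le hlt'.le)
      have hx1sq : ‖x‖^2 ≤ 1 := by nlinarith [norm_nonneg x]
      rw [Real.norm_eq_abs, abs_of_nonneg (pow_nonneg (by linarith) m)]
      exact pow_le_pow_left₀ (by linarith) (by linarith) m
  -- volume of closed ball
  have hvol : (volume (Metric.closedBall (0:E) 1)).toReal = π^n / Nat.factorial n := by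
    rw [MeasureTheory.Measure.addHaar_closedBall_eq_addHaar_ball]
    exact vol_ball n hn
  have hfac1 : (1:ℝ) ≤ Nat.factorial n := by exact_mod_cast Nat.one_le_iff_ne_zero.2 n.factorial_ne_zero
  have hvolle : (volume (Metric.closedBall (0:E) 1)).toReal ≤ π^n := by
    rw [hvol]
    have : (0:ℝ) < π^n := by positivity
    rw [div_le_iff₀ (by linarith : (0:ℝ) < (Nat.factorial n : ℝ))]
    nlinarith
  -- assembling
  have hpinv : Real.pi ^ (-(n : ℝ)) = (π^n)⁻¹ := by
    rw [Real.rpow_neg Real.pi_pos.le, Real.rpow_natCast]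
  have hpip : (0:ℝ) < π^n := by positivity
  rw [hset, hpinv]
  have hEq : (π^n)⁻¹ * (∫ x in Metric.closedBall (0:E) (Real.sqrt c), ((1:ℝ) - ‖x‖^2)^m)
      - (Nat.factorial m : ℝ) / (Nat.factorial (m + n) : ℝ)
      = -((π^n)⁻¹ * ∫ x in Metric.closedBall (0:E) 1 \ Metric.closedBall (0:E) (Real.sqrt c),
          ((1:ℝ) - ‖x‖^2)^m) := by
    rw [hdiff, exact_full n hn m]
    field_simp
    ring
  rw [hEq, abs_neg, abs_mul, abs_of_pos (inv_pos.2 hpip)]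
  have step1 : (π^n)⁻¹ * |∫ x in Metric.closedBall (0:E) 1 \ Metric.closedBall (0:E) (Real.sqrt c),
      ((1:ℝ) - ‖x‖^2)^m| ≤ (1-c)^m := by
    have h1 : |∫ x in Metric.closedBall (0:E) 1 \ Metric.closedBall (0:E) (Real.sqrt c),
        ((1:ℝ) - ‖x‖^2)^m| ≤ (1-c)^m * π^n := by
      calc _ ≤ (1-c)^m * (volume (Metric.closedBall (0:E) 1)).toReal := hbound
        _ ≤ (1-c)^m * π^n := mul_le_mul_of_nonneg_left hvolle (pow_nonneg (by linarith) m)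
    calc (π^n)⁻¹ * |_| ≤ (π^n)⁻¹ * ((1-c)^m * π^n) := mul_le_mul_of_nonneg_left h1 (inv_pos.2 hpip).le
      _ = (1-c)^m := by field_simp
  -- exponential bound
  have step2 : ((1:ℝ)-c)^m ≤ Real.exp (-(b * (Real.log m)^2)) := by
    have h1 : (1:ℝ) - c ≤ Real.exp (-c) := by
      have := Real.add_one_le_exp (-c)
      linarith
    have h2 : ((1:ℝ)-c)^m ≤ Real.exp (-c)^m := pow_le_pow_left₀ (by linarith) h1 m
    rw [← Real.exp_nat_mul] at h2
    have h3 : (m:ℝ) * (-c) = -(b * (Real.log m)^2) := by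
      rw [hceq]; field_simp
    rwa [h3] at h2
  -- m^{-q} bound
  have hexpqb : Real.exp (q/b) ≤ m := by
    have h1 := Nat.le_ceil (Real.exp (q/b))
    have h2 : (⌈Real.exp (q/b)⌉₊ : ℝ) + 2 ≤ m := by
      have : ⌈Real.exp (q/b)⌉₊ + 2 ≤ m := le_trans (le_trans (le_max_right _ _) (le_max_right _ _)) hm
      exact_mod_cast this
    linarith
  have hlogqb : q/b ≤ Real.log m := by
    have := Real.log_le_log (Real.exp_pos _) hexpqb
    rwa [Real.log_exp] at this
  have step3 : Real.exp (-(b * (Real.log m)^2)) ≤ (m:ℝ) ^ (-q) := by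
    rw [Real.rpow_def_of_pos hm0]
    apply Real.exp_le_exp.2
    have h1 : q ≤ b * Real.log m := by
      rw [div_le_iff₀ hb] at hlogqb
      linarith [hlogqb]
    nlinarith
  rw [one_mul]
  exact le_trans step1 (le_trans step2 step3)
end

section
/- Fix an integer n ≥ 1 and reals b > 0 and q > 0. Define a_m = m/(log m)² for integers m ≥ 2. Then there exist a constant C > 0 and an integer M ≥ 2, depending only on b, q and n, such that for all integers m ≥ M (in particular large enough that b/a_m ≤ 1), ∫_{{x ∈ ℝ^{2n} : b/a_m ≤ ‖x‖² ≤ 1}} (1 − ‖x‖²)^m dx ≤ C m^{−q}. -/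
open MeasureTheory Real

/-- Tail estimate: with `aₘ = m/(log m)²`, the contribution of the annulus
`{b/aₘ ≤ ‖x‖² ≤ 1}` in `ℝ^{2n}` to `∫ (1-‖x‖²)^m dx` decays faster than any power of `m`. -/
theorem stmt_2 (n : ℕ) (hn : 1 ≤ n) (b q : ℝ) (hb : 0 < b) (hq : 0 < q) :
    ∃ (C : ℝ) (M : ℕ), 0 < C ∧ 2 ≤ M ∧ ∀ m : ℕ, M ≤ m →
      (∫ x in {x : EuclideanSpace ℝ (Fin (2 * n)) |
          b / ((m : ℝ) / (Real.log m) ^ 2) ≤ ‖x‖ ^ 2 ∧ ‖x‖ ^ 2 ≤ 1},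
        ((1 : ℝ) - ‖x‖ ^ 2) ^ m)
      ≤ C * (m : ℝ) ^ (-q) := by
  set V : ℝ := (volume (Metric.closedBall (0 : EuclideanSpace ℝ (Fin (2 * n))) 1)).toReal
  have hV : 0 ≤ V := ENNReal.toReal_nonneg
  refine ⟨V + 1, max 2 ⌈Real.exp (q / b)⌉₊, by linarith, le_max_left _ _, ?_⟩
  intro m hm
  have hm2 : 2 ≤ m := le_trans (le_max_left _ _) hm
  have hm1 : (1 : ℝ) ≤ (m : ℝ) := by exact_mod_cast le_trans (by norm_num) hm2
  have hmpos : (0 : ℝ) < m := by linarith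
  have hlog : 0 < Real.log m := Real.log_pos (by exact_mod_cast lt_of_lt_of_le (by norm_num) hm2)
  set S : Set (EuclideanSpace ℝ (Fin (2 * n))) :=
    {x | b / ((m : ℝ) / (Real.log m) ^ 2) ≤ ‖x‖ ^ 2 ∧ ‖x‖ ^ 2 ≤ 1} with hS
  have hSsub : S ⊆ Metric.closedBall 0 1 := by
    intro x hx
    simp only [Metric.mem_closedBall, dist_zero_right]
    nlinarith [hx.2, norm_nonneg x]
  have hSfin : volume S < ⊤ :=
    lt_of_le_of_lt (measure_mono hSsub) (measure_closedBall_lt_top)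
  have key : ∀ x ∈ S, ‖((1 : ℝ) - ‖x‖ ^ 2) ^ m‖ ≤ Real.exp (-(b * (Real.log m) ^ 2)) := by
    intro x hx
    obtain ⟨h1, h2⟩ := hx
    rw [Real.norm_eq_abs, abs_pow, abs_of_nonneg (by linarith)]
    have hb1 : b * (Real.log m) ^ 2 ≤ (m : ℝ) * ‖x‖ ^ 2 := by
      have heq : b / ((m : ℝ) / (Real.log m) ^ 2) = b * (Real.log m) ^ 2 / m := by
        field_simp
      rw [heq, div_le_iff₀ hmpos] at h1
      nlinarith
    calc (1 - ‖x‖ ^ 2) ^ m ≤ (Real.exp (-‖x‖ ^ 2)) ^ m := by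
          apply pow_le_pow_left₀ (by linarith)
          linarith [Real.add_one_le_exp (-‖x‖ ^ 2)]
      _ = Real.exp ((m : ℝ) * (-‖x‖ ^ 2)) := (Real.exp_nat_mul _ m).symm
      _ ≤ Real.exp (-(b * (Real.log m) ^ 2)) := by
          apply Real.exp_le_exp.2; nlinarith
  have hmeas : AEStronglyMeasurable (fun x : EuclideanSpace ℝ (Fin (2 * n)) =>
      ((1 : ℝ) - ‖x‖ ^ 2) ^ m) (volume.restrict S) :=
    (Continuous.aestronglyMeasurable (by fun_prop))
  have hbound := norm_setIntegral_le_of_norm_le_const hSfin key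
  have hint : (∫ x in S, ((1 : ℝ) - ‖x‖ ^ 2) ^ m)
      ≤ Real.exp (-(b * (Real.log m) ^ 2)) * (volume S).toReal := by
    calc (∫ x in S, ((1 : ℝ) - ‖x‖ ^ 2) ^ m)
        ≤ ‖∫ x in S, ((1 : ℝ) - ‖x‖ ^ 2) ^ m‖ := le_abs_self _
      _ ≤ _ := hbound
  have hexp : Real.exp (-(b * (Real.log m) ^ 2)) ≤ (m : ℝ) ^ (-q) := by
    have h1 : Real.exp (-(b * (Real.log m) ^ 2)) = (m : ℝ) ^ (-(b * Real.log m)) := by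
      rw [Real.rpow_def_of_pos hmpos]; ring_nf
    rw [h1]
    apply Real.rpow_le_rpow_of_exponent_le hm1
    have : Real.exp (q / b) ≤ (m : ℝ) := by
      calc Real.exp (q / b) ≤ (⌈Real.exp (q / b)⌉₊ : ℝ) := Nat.le_ceil _
        _ ≤ (m : ℝ) := by exact_mod_cast le_trans (le_max_right _ _) hm
    have hlog2 : q / b ≤ Real.log m := by
      rw [← Real.log_exp (q / b)]
      exact Real.log_le_log (Real.exp_pos _) this
    rw [div_le_iff₀ hb] at hlog2
    nlinarith
  have hvol : (volume S).toReal ≤ V :=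
    ENNReal.toReal_mono measure_closedBall_lt_top.ne (measure_mono hSsub)
  have hrpow : (0 : ℝ) < (m : ℝ) ^ (-q) := Real.rpow_pos_of_pos hmpos _
  calc (∫ x in S, ((1 : ℝ) - ‖x‖ ^ 2) ^ m)
      ≤ Real.exp (-(b * (Real.log m) ^ 2)) * (volume S).toReal := hint
    _ ≤ (m : ℝ) ^ (-q) * V := by
        apply mul_le_mul hexp hvol ENNReal.toReal_nonneg (le_of_lt hrpow)
    _ ≤ (V + 1) * (m : ℝ) ^ (-q) := by nlinarith
end
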